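/- arXiv:2109.04924 — 10 statements merged into one kernel-verified Lean document; each statement's English description precedes it below -/
import Mathlib

section
/- The maximal graded ideal m₁ of the one-variable real-exponent polynomial ring, i.e., the ideal spanned by all monomials x^a with a > 0, is not finitely generated. -/
open scoped NNReal
abbrev R1 (k : Type) [Field k] := AddMonoidAlgebra k ℝ≥0
noncomputable def m1 (k : Type) [Field k] : Ideal (R1 k) :=
  Ideal.span {f | ∃ a : ℝ≥0, 0 < a ∧ f = AddMonoidAlgebra.single a 1}

/-- Elements all of whose coefficients below `ε` vanish form an ideal. -/
def Ieps (k : Type) [Field k] (ε : ℝ≥0) : Ideal (R1 k) where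
  carrier := {f | ∀ b : ℝ≥0, b < ε → f.coeff b = 0}
  add_mem' := by
    intro f g hf hg b hb
    show (f + g).coeff b = 0
    rw [AddMonoidAlgebra.coeff_add, Finsupp.add_apply, hf b hb, hg b hb, add_zero]
  zero_mem' := fun b _ => rfl
  smul_mem' := by
    classical
    intro c f hf b hb
    rw [smul_eq_mul, AddMonoidAlgebra.mul_apply]
    refine Finset.sum_eq_zero fun a₁ h₁ => Finset.sum_eq_zero fun a₂ h₂ => ?_
    dsimp only
    rw [if_neg]
    intro hsum
    have ha₂ : ε ≤ a₂ := by
      by_contra h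
      exact (Finsupp.mem_support_iff.mp h₂) (hf a₂ (lt_of_not_ge h))
    have : ε ≤ b := hsum ▸ le_add_of_nonneg_of_le zero_le ha₂
    exact absurd hb (not_lt.mpr this)

/-- Elements with vanishing constant term form an ideal. -/
def J0 (k : Type) [Field k] : Ideal (R1 k) where
  carrier := {f | f.coeff 0 = 0}
  add_mem' := by
    intro f g hf hg
    show (f + g).coeff 0 = 0
    rw [AddMonoidAlgebra.coeff_add, Finsupp.add_apply, hf, hg, add_zero]
  zero_mem' := rfl
  smul_mem' := by
    classical
    intro c f hf
    show (c * f).coeff 0 = 0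
    rw [AddMonoidAlgebra.mul_apply]
    refine Finset.sum_eq_zero fun a₁ h₁ => Finset.sum_eq_zero fun a₂ h₂ => ?_
    dsimp only
    rw [if_neg]
    intro hsum
    have ha₂ : a₂ = 0 := by
      have := add_eq_zero.mp hsum
      exact this.2
    exact (Finsupp.mem_support_iff.mp h₂) (ha₂ ▸ hf)

/-- The maximal graded ideal m₁ is not finitely generated. -/
theorem stmt1 (k : Type) [Field k] : ¬ (m1 k).FG := by
  classical
  rintro ⟨T, hT⟩
  have hm1J : m1 k ≤ J0 k := by
    rw [m1, Ideal.span_le]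
    rintro f ⟨a, ha, rfl⟩
    show (AddMonoidAlgebra.single a (1 : k)).coeff 0 = 0
    rw [AddMonoidAlgebra.coeff_single, Finsupp.single_apply, if_neg ha.ne']
  set U : Finset ℝ≥0 := T.sup (fun f => f.coeff.support) with hU_def
  by_cases hU : U.Nonempty
  · set ε := U.min' hU with hε_def
    have hεU : ε ∈ U := U.min'_mem hU
    obtain ⟨g, hgT, hgs⟩ := Finset.mem_sup.mp hεU
    have hg0 : g.coeff 0 = 0 := hm1J (hT ▸ Ideal.subset_span hgT)
    have hε : 0 < ε := by
      rcases eq_or_lt_of_le (zero_le : 0 ≤ ε) with h | h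
      · exact absurd hg0 (Finsupp.mem_support_iff.mp (h ▸ hgs))
      · exact h
    have hTI : (T : Set (R1 k)) ⊆ (Ieps k ε : Set (R1 k)) := by
      intro f hf b hb
      by_contra h
      have hb' : b ∈ U := Finset.mem_sup.mpr ⟨f, hf, Finsupp.mem_support_iff.mpr h⟩
      exact absurd hb (not_lt.mpr (U.min'_le b hb'))
    have hle : m1 k ≤ Ieps k ε := hT ▸ Ideal.span_le.mpr hTI
    have hmem : AddMonoidAlgebra.single (ε / 2) (1 : k) ∈ m1 k :=
      Ideal.subset_span ⟨ε / 2, by positivity, rfl⟩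
    have h2 : (Finsupp.single (ε / 2) (1 : k)) (ε / 2) = 0 :=
      hle hmem (ε / 2) (NNReal.half_lt_self hε.ne')
    rw [Finsupp.single_apply, if_pos rfl] at h2
    exact one_ne_zero h2
  · have hmem : AddMonoidAlgebra.single (1 : ℝ≥0) (1 : k) ∈ m1 k :=
      Ideal.subset_span ⟨1, one_pos, rfl⟩
    rw [← hT] at hmem
    have hT0 : ∀ g ∈ T, g = (0 : R1 k) := by
      intro g hg
      ext b
      by_contra h
      exact hU ⟨b, Finset.mem_sup.mpr ⟨g, hg, Finsupp.mem_support_iff.mpr h⟩⟩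
    have : Ideal.span (T : Set (R1 k)) = ⊥ := by
      rw [Ideal.span_eq_bot]
      exact fun g hg => hT0 g hg
    rw [this, Ideal.mem_bot] at hmem
    exact one_ne_zero (AddMonoidAlgebra.single_eq_zero.mp hmem)
end

section
/- The maximal graded ideal m₁ of the one-variable real-exponent polynomial ring is a flat R₁-module. -/
open scoped NNReal
lemma m1_mem_factor (k : Type) [Field k] {x : R1 k} (hx : x ∈ m1 k) :
    ∃ ε : ℝ≥0, 0 < ε ∧ ∃ g : R1 k, x = g * AddMonoidAlgebra.single ε 1 := by
  refine Submodule.span_induction ?_ ?_ ?_ ?_ hx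
  · rintro f ⟨a, ha, rfl⟩
    exact ⟨a, ha, 1, by rw [one_mul]⟩
  · exact ⟨1, one_pos, 0, by rw [zero_mul]⟩
  · rintro x y - - ⟨ε, hε, g, rfl⟩ ⟨ε', hε', g', rfl⟩
    refine ⟨min ε ε', lt_min hε hε',
      g * AddMonoidAlgebra.single (ε - min ε ε') 1
        + g' * AddMonoidAlgebra.single (ε' - min ε ε') 1, ?_⟩
    rw [add_mul, mul_assoc, mul_assoc, AddMonoidAlgebra.single_mul_single,
      AddMonoidAlgebra.single_mul_single, one_mul,
      tsub_add_cancel_of_le (min_le_left ε ε'), tsub_add_cancel_of_le (min_le_right ε ε')]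
  · rintro r x - ⟨ε, hε, g, rfl⟩
    exact ⟨ε, hε, r * g, by rw [smul_eq_mul, mul_assoc]⟩

/-- m₁ is a flat R₁-module. -/
theorem stmt3 (k : Type) [Field k] : Module.Flat (R1 k) (m1 k) := by
  apply Module.Flat.of_forall_isTrivialRelation
  intro l f x hfx
  cases isEmpty_or_nonempty (Fin l)
  · exact ⟨0, 0, fun _ => 0, fun i => (IsEmpty.false i).elim,
      fun _ => by simp⟩
  · -- choose factorizations
    choose ε hε g hg using fun i => m1_mem_factor k (x i).2
    set δ : ℝ≥0 := Finset.univ.inf' Finset.univ_nonempty ε with hδdef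
    have hδpos : 0 < δ := by
      rw [hδdef, Finset.lt_inf'_iff]
      exact fun i _ => hε i
    set e : R1 k := AddMonoidAlgebra.single δ 1 with he
    have hemem : e ∈ m1 k := Ideal.subset_span ⟨δ, hδpos, rfl⟩
    set G : Fin l → R1 k := fun i => g i * AddMonoidAlgebra.single (ε i - δ) 1 with hG
    have hxG : ∀ i, (x i : R1 k) = G i * e := by
      intro i
      rw [hG, he, mul_assoc, AddMonoidAlgebra.single_mul_single, one_mul,
        tsub_add_cancel_of_le (Finset.inf'_le _ (Finset.mem_univ i)), ← hg i]
    have hsum : (∑ i, f i * G i) * e = 0 := by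
      rw [Finset.sum_mul]
      have := congrArg (Subtype.val) hfx
      push_cast at this
      simpa [hxG, mul_assoc] using this
    have hene : e ≠ 0 := by
      rw [he]; simp [AddMonoidAlgebra.single_eq_zero]
    have hsum' : ∑ i, f i * G i = 0 := by
      rcases mul_eq_zero.mp hsum with h | h
      · exact h
      · exact absurd h hene
    refine ⟨1, fun i _ => G i, fun _ => ⟨e, hemem⟩, ?_, ?_⟩
    · intro i
      ext
      simp [hxG i, Submodule.coe_smul, smul_eq_mul]
    · intro j
      simpa using hsum'
end

section
/- The quotient m₁/m₁² is zero, where m₁ is the maximal graded ideal of the one-variable real-exponent polynomial ring; in particular m₁² = m₁. -/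
open scoped NNReal
theorem m1_sq (k : Type) [Field k] : (m1 k) ^ 2 = m1 k := by
  refine le_antisymm (Ideal.pow_le_self two_ne_zero) ?_
  rw [m1, Ideal.span_le, pow_two]
  rintro f ⟨a, ha, rfl⟩
  have : (AddMonoidAlgebra.single a 1 : R1 k)
      = AddMonoidAlgebra.single (a / 2) 1 * AddMonoidAlgebra.single (a / 2) 1 := by
    rw [AddMonoidAlgebra.single_mul_single, one_mul]
    congr 1
    rw [← add_div, eq_div_iff (two_ne_zero (α := ℝ≥0)), mul_two]
  rw [this]
  have hmem : (AddMonoidAlgebra.single (a / 2) 1 : R1 k) ∈ m1 k :=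
    Ideal.subset_span ⟨a / 2, by positivity, rfl⟩
  exact Ideal.mul_mem_mul hmem hmem

/-- m₁/m₁² = 0; in particular m₁² = m₁. -/
theorem stmt4 (k : Type) [Field k] :
    Subsingleton (m1 k).Cotangent ∧ (m1 k) ^ 2 = m1 k := by
  refine ⟨?_, m1_sq k⟩
  rw [Ideal.cotangent_subsingleton_iff]
  show m1 k * m1 k = m1 k
  rw [← pow_two]; exact m1_sq k
end

section
/- The maximal graded ideal m₁ of the one-variable real-exponent polynomial ring is not a projective R₁-module. -/
open scoped NNReal
lemma mul_apply_eq_zero_of_lt {k : Type} [Field k] (f g : R1 k) (c : ℝ≥0)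
    (h : ∀ q ∈ g.coeff.support, c < q) : (f * g).coeff c = 0 := by
  classical
  rw [AddMonoidAlgebra.coeff_mul]
  simp only [Finsupp.sum]
  apply Finset.sum_eq_zero
  intro a₁ ha₁
  apply Finset.sum_eq_zero
  intro a₂ ha₂
  have h2 := h a₂ ha₂
  have : a₁ + a₂ ≠ c := by
    have hlt : c < a₁ + a₂ := lt_of_lt_of_le h2 le_add_self
    exact hlt.ne'
  rw [if_neg this]

lemma m1_support_pos {k : Type} [Field k] (f : R1 k) (hf : f ∈ m1 k) :
    ∀ q ∈ f.coeff.support, 0 < q := by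
  classical
  refine Submodule.span_induction ?_ ?_ ?_ ?_ hf
  · rintro x ⟨a, ha, rfl⟩ q hq
    rw [AddMonoidAlgebra.coeff_single] at hq
    have := Finsupp.support_single_subset hq
    simp only [Finset.mem_singleton] at this
    exact this ▸ ha
  · intro q hq; simp at hq
  · intro x y _ _ hx hy q hq
    rw [AddMonoidAlgebra.coeff_add] at hq
    have := Finsupp.support_add hq
    rcases Finset.mem_union.mp this with h | h
    · exact hx q h
    · exact hy q h
  · intro r x _ hx q hq
    rcases eq_or_lt_of_le (zero_le : (0 : ℝ≥0) ≤ q) with h | h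
    · exfalso
      have : (r • x).coeff q = 0 := by
        rw [smul_eq_mul]
        exact mul_apply_eq_zero_of_lt r x q (fun p hp => h ▸ hx p hp)
      exact (Finsupp.mem_support_iff.mp hq) this
    · exact h

/-- m₁ is not a projective R₁-module. -/
theorem stmt5 (k : Type) [Field k] : ¬ Module.Projective (R1 k) (m1 k) := by
  classical
  rw [Module.projective_def]
  rintro ⟨s, hs⟩
  -- the element x^1 of m1
  have h1m : (AddMonoidAlgebra.single (1 : ℝ≥0) (1 : k)) ∈ m1 k :=
    Ideal.subset_span ⟨1, one_pos, rfl⟩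
  set zε : m1 k := ⟨AddMonoidAlgebra.single (1 : ℝ≥0) (1 : k), h1m⟩ with hzε
  set F : m1 k →₀ R1 k := s zε with hF
  -- choose δ smaller than 1 and all supports
  set T : Finset ℝ≥0 :=
    insert 1 (F.support.biUnion fun y => (y : R1 k).coeff.support) with hT
  have hTne : T.Nonempty := ⟨1, Finset.mem_insert_self _ _⟩
  set t : ℝ≥0 := T.min' hTne with ht
  have htT : t ∈ T := Finset.min'_mem _ _
  have htpos : 0 < t := by
    rcases Finset.mem_insert.mp htT with h | h
    · rw [h]; exact one_pos
    · rcases Finset.mem_biUnion.mp h with ⟨y, hy, hq⟩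
      exact m1_support_pos (y : R1 k) y.2 t hq
  set δ : ℝ≥0 := t / 2 with hδ
  have hδpos : 0 < δ := by positivity
  have hδt : δ < t := NNReal.half_lt_self htpos.ne'
  have ht1 : t ≤ 1 := Finset.min'_le _ _ (Finset.mem_insert_self _ _)
  have hδ1 : δ ≤ 1 := le_of_lt (lt_of_lt_of_le hδt ht1)
  -- the element x^δ of m1
  have hδm : (AddMonoidAlgebra.single δ (1 : k)) ∈ m1 k :=
    Ideal.subset_span ⟨δ, hδpos, rfl⟩
  set zδ : m1 k := ⟨AddMonoidAlgebra.single δ (1 : k), hδm⟩ with hzδ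
  set c : R1 k := AddMonoidAlgebra.single (1 - δ) 1 with hc
  have hczδ : c • zδ = zε := by
    apply Subtype.ext
    show c * AddMonoidAlgebra.single δ (1 : k) = AddMonoidAlgebra.single 1 1
    rw [hc, AddMonoidAlgebra.single_mul_single, one_mul, tsub_add_cancel_of_le hδ1]
  set G : m1 k →₀ R1 k := s zδ with hG
  have hFG : F = c • G := by rw [hF, hG, ← hczδ, map_smul]
  -- the representation of x^1
  have hrep := hs zε
  have hrep2 : (AddMonoidAlgebra.single (1 : ℝ≥0) (1 : k))
      = ∑ y ∈ F.support, (F y) * (y : R1 k) := by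
    have := congrArg (fun z : m1 k => (z : R1 k)) hrep
    simp only [Finsupp.linearCombination_apply, Finsupp.sum] at this
    rw [show (AddMonoidAlgebra.single (1 : ℝ≥0) (1 : k)) = (zε : R1 k) from rfl, ← this]
    push_cast
    rfl
  have heval := congrArg (fun f : R1 k => f.coeff (1 : ℝ≥0)) hrep2
  simp only [AddMonoidAlgebra.coeff_single, Finsupp.single_eq_same] at heval
  rw [AddMonoidAlgebra.coeff_sum, Finsupp.finset_sum_apply] at heval
  have hzero : ∀ y ∈ F.support, ((F y) * (y : R1 k)).coeff (1 : ℝ≥0) = 0 := by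
    intro y hy
    have hFy : F y = c * G y := by rw [hFG, Finsupp.smul_apply, smul_eq_mul]
    rw [hFy, mul_assoc]
    have H : ∀ a : ℝ≥0, (1 - δ) + a = 1 ↔ a = δ := by
      intro a
      constructor
      · intro h
        have : (1 - δ) + a = (1 - δ) + δ := by rw [h, tsub_add_cancel_of_le hδ1]
        exact add_left_cancel this
      · rintro rfl; exact tsub_add_cancel_of_le hδ1
    rw [AddMonoidAlgebra.coeff_single_mul_eq_mul_coeff (H := fun a _ => H a), one_mul]
    apply mul_apply_eq_zero_of_lt
    intro q hq
    have hqT : q ∈ T := Finset.mem_insert_of_mem (Finset.mem_biUnion.mpr ⟨y, hy, hq⟩)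
    exact lt_of_lt_of_le hδt (Finset.min'_le _ _ hqT)
  rw [Finset.sum_congr rfl hzero, Finset.sum_const_zero] at heval
  exact one_ne_zero heval
end

section
/- Choose a strictly decreasing sequence (ε_k)_{k∈ℕ} of positive reals with limit 0. Let F = ⊕_{k∈ℕ} ⟨x^{ε_k}⟩ be the direct sum of the principal ideals generated by x^{ε_k} in R₁, with k-th basis vector 1_k. The R₁-module map d : F → F sending 1_k ↦ 1_k − x^{ε_k − ε_{k+1}}·1_{k+1} is injective, and the augmentation α : F → m₁, 1_k ↦ x^{ε_k}, is surjective with kernel equal to the image of d. Hence 0 → F → F → m₁ → 0 is a free resolution of m₁ of length 1. -/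
open scoped NNReal
/-- The differential d : F → F, 1ₖ ↦ 1ₖ − x^{εₖ−εₖ₊₁}·1ₖ₊₁, on F = ⊕ₖ R₁·1ₖ. -/
noncomputable def koszulD (k : Type) [Field k] (ε : ℕ → ℝ≥0) :
    (ℕ →₀ R1 k) →ₗ[R1 k] (ℕ →₀ R1 k) :=
  Finsupp.lsum (R1 k) fun j => LinearMap.toSpanSingleton (R1 k) (ℕ →₀ R1 k)
    (Finsupp.single j 1 -
      Finsupp.single (j + 1) (AddMonoidAlgebra.single (ε j - ε (j + 1)) (1 : k)))

/-- The augmentation α : F → R₁, 1ₖ ↦ x^{εₖ}. -/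
noncomputable def koszulAug (k : Type) [Field k] (ε : ℕ → ℝ≥0) :
    (ℕ →₀ R1 k) →ₗ[R1 k] R1 k :=
  Finsupp.lsum (R1 k) fun j => LinearMap.toSpanSingleton (R1 k) (R1 k)
    (AddMonoidAlgebra.single (ε j) (1 : k))

section Aux

variable {k : Type} [Field k] (ε : ℕ → ℝ≥0)

lemma koszulD_coord_zero (f : ℕ →₀ R1 k) : (koszulD k ε f) 0 = f 0 := by
  simp [koszulD, Finsupp.sum_apply, Finsupp.single_apply, Finsupp.sum_ite_eq']

lemma koszulD_coord_succ (f : ℕ →₀ R1 k) (n : ℕ) :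
    (koszulD k ε f) (n+1) = f (n+1) - f n * AddMonoidAlgebra.single (ε n - ε (n+1)) (1:k) := by
  simp [koszulD, Finsupp.sum_apply, Finsupp.single_apply, Finsupp.sum_sub, mul_sub,
    Finsupp.sum_ite_eq', mul_ite]

lemma aug_single (j : ℕ) (c : R1 k) :
    koszulAug k ε (Finsupp.single j c) = c * AddMonoidAlgebra.single (ε j) (1:k) := by
  simp [koszulAug, LinearMap.toSpanSingleton_apply, smul_eq_mul]

lemma aug_apply (f : ℕ →₀ R1 k) :
    koszulAug k ε f = f.sum (fun j c => c * AddMonoidAlgebra.single (ε j) (1:k)) := by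
  simp only [koszulAug, Finsupp.lsum_apply]
  rfl

lemma single_mul_single_sub (a b : ℝ≥0) (h : b ≤ a) :
    AddMonoidAlgebra.single (a - b) (1:k) * AddMonoidAlgebra.single b (1:k)
      = AddMonoidAlgebra.single a (1:k) := by
  rw [AddMonoidAlgebra.single_mul_single, tsub_add_cancel_of_le h, one_mul]

lemma single_zero_one : AddMonoidAlgebra.single (0:ℝ≥0) (1:k) = 1 := rfl

lemma single_ne_zero' (a : ℝ≥0) : AddMonoidAlgebra.single a (1:k) ≠ 0 := by
  exact AddMonoidAlgebra.single_ne_zero.mpr one_ne_zero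

end Aux

/-- 0 → F → F → m₁ → 0 is a free resolution of m₁ of length 1. -/
theorem stmt6 (k : Type) [Field k] (ε : ℕ → ℝ≥0) (hanti : StrictAnti ε)
    (hpos : ∀ j, 0 < ε j) (hlim : Filter.Tendsto ε Filter.atTop (nhds 0)) :
    Function.Injective (koszulD k ε) ∧
    LinearMap.range (koszulAug k ε) = (m1 k).restrictScalars (R1 k) ∧
    LinearMap.ker (koszulAug k ε) = LinearMap.range (koszulD k ε) := by
  have hmono : Antitone ε := hanti.antitone
  refine ⟨?_, ?_, ?_⟩
  · -- injectivity of d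
    rw [← LinearMap.ker_eq_bot]
    rw [eq_bot_iff]
    intro f hf
    have hf0 : koszulD k ε f = 0 := hf
    have hz : ∀ m, f m = 0 := by
      intro m
      induction m with
      | zero =>
        have := koszulD_coord_zero ε f
        rw [hf0] at this; simpa using this.symm
      | succ n ih =>
        have := koszulD_coord_succ ε f n
        rw [hf0] at this
        simp only [Finsupp.coe_zero, Pi.zero_apply] at this
        have := this.symm
        rw [sub_eq_zero] at this
        rw [this, ih, zero_mul]
    simp only [Submodule.mem_bot]
    exact Finsupp.ext hz
  · -- range of α = m1
    apply le_antisymm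
    · rintro y ⟨f, rfl⟩
      show koszulAug k ε f ∈ m1 k
      rw [aug_apply]
      apply Submodule.sum_mem
      intro j _
      exact Ideal.mul_mem_left _ _ (Ideal.subset_span ⟨ε j, hpos j, rfl⟩)
    · intro y hy
      have hy' : y ∈ Ideal.span {f | ∃ a : ℝ≥0, 0 < a ∧ f = AddMonoidAlgebra.single a 1} := hy
      refine Submodule.span_le.mpr ?_ hy'
      rintro g ⟨a, ha, rfl⟩
      obtain ⟨j, hj⟩ := (hlim.eventually_lt_const ha).exists
      refine ⟨Finsupp.single j (AddMonoidAlgebra.single (a - ε j) (1:k)), ?_⟩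
      rw [aug_single, single_mul_single_sub _ _ hj.le]
  · -- ker α = range d
    apply le_antisymm
    · -- hard direction: ker ⊆ range
      intro f hf
      have hf0 : koszulAug k ε f = 0 := hf
      set N := f.support.sup id with hN
      have hsupp : ∀ i ∈ f.support, i ≤ N := fun i hi => Finset.le_sup (f := id) hi
      set hfun : ℕ → R1 k := fun j => ∑ i ∈ Finset.range (j+1),
        f i * AddMonoidAlgebra.single (ε i - ε j) (1:k) with hfun_def
      have key : ∀ j, N ≤ j → hfun j = 0 := by
        intro j hj
        have hmul : hfun j * AddMonoidAlgebra.single (ε j) (1:k) = 0 := by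
          rw [hfun_def]
          simp only [Finset.sum_mul]
          have heq : ∀ i ∈ Finset.range (j+1),
              f i * AddMonoidAlgebra.single (ε i - ε j) (1:k) *
                AddMonoidAlgebra.single (ε j) (1:k)
              = f i * AddMonoidAlgebra.single (ε i) (1:k) := by
            intro i hi
            rw [mul_assoc, single_mul_single_sub _ _
              (hmono (Nat.lt_succ_iff.mp (Finset.mem_range.mp hi)))]
          rw [Finset.sum_congr rfl heq]
          have : koszulAug k ε f = ∑ i ∈ Finset.range (j+1),
              f i * AddMonoidAlgebra.single (ε i) (1:k) := by
            rw [aug_apply]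
            apply Finsupp.sum_of_support_subset
            · intro i hi
              exact Finset.mem_range.mpr (Nat.lt_succ_of_le (le_trans (hsupp i hi) hj))
            · intro i _; rw [zero_mul]
          rw [← this, hf0]
        rcases mul_eq_zero.mp hmul with h | h
        · exact h
        · exact absurd h (single_ne_zero' (ε j))
      set h : ℕ →₀ R1 k := Finsupp.onFinset (Finset.range (N+1)) hfun (by
        intro j hj
        by_contra hmem
        simp only [Finset.mem_range, Nat.lt_succ_iff, not_le] at hmem
        exact hj (key j hmem.le)) with hh
      refine ⟨h, ?_⟩
      ext m
      have happ : ∀ j, h j = hfun j := fun j => rfl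
      cases m with
      | zero =>
        rw [koszulD_coord_zero, happ, hfun_def]
        simp [single_zero_one]
      | succ n =>
        rw [koszulD_coord_succ, happ, happ, hfun_def]
        simp only
        rw [Finset.sum_range_succ]
        have heq : (∑ i ∈ Finset.range (n+1),
            f i * AddMonoidAlgebra.single (ε i - ε n) (1:k)) *
              AddMonoidAlgebra.single (ε n - ε (n+1)) (1:k)
            = ∑ i ∈ Finset.range (n+1),
              f i * AddMonoidAlgebra.single (ε i - ε (n+1)) (1:k) := by
          rw [Finset.sum_mul]
          apply Finset.sum_congr rfl
          intro i hi
          rw [mul_assoc, AddMonoidAlgebra.single_mul_single, one_mul,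
            tsub_add_tsub_cancel (hmono (Nat.lt_succ_iff.mp (Finset.mem_range.mp hi)))
              (hmono (Nat.le_succ n))]
        rw [heq]
        simp [single_zero_one]
    · -- range d ⊆ ker α
      rintro y ⟨f, rfl⟩
      simp only [LinearMap.mem_ker]
      have : (koszulAug k ε).comp (koszulD k ε) = 0 := by
        apply Finsupp.lhom_ext
        intro j c
        simp only [LinearMap.comp_apply, LinearMap.zero_apply]
        rw [koszulD, Finsupp.lsum_single, LinearMap.toSpanSingleton_apply]
        rw [smul_sub, map_sub]
        have h1 : c • (Finsupp.single j (1 : R1 k)) = Finsupp.single j c := by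
          rw [Finsupp.smul_single, smul_eq_mul, mul_one]
        have h2 : c • (Finsupp.single (j+1) (AddMonoidAlgebra.single (ε j - ε (j+1)) (1:k)))
            = Finsupp.single (j+1) (c * AddMonoidAlgebra.single (ε j - ε (j+1)) (1:k)) := by
          rw [Finsupp.smul_single, smul_eq_mul]
        rw [h1, h2, aug_single, aug_single, mul_assoc,
          single_mul_single_sub _ _ (hmono (Nat.le_succ j)), sub_self]
      exact LinearMap.congr_fun this f
end

section
/- For any ε > 0, the sequence x₁^ε, …, x_n^ε is a regular sequence in the n-variable real-exponent polynomial ring R = k[ℝ≥0^n]. -/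
open scoped NNReal
open CategoryTheory
/-- The n-variable real-exponent polynomial ring R = k[ℝ≥0ⁿ]. -/
abbrev Rn (k : Type) [Field k] (n : ℕ) := AddMonoidAlgebra k (Fin n → ℝ≥0)
/-- The monomial x_i^ε in R. -/
noncomputable def xPow (k : Type) [Field k] (n : ℕ) (i : Fin n) (ε : ℝ≥0) : Rn k n :=
  AddMonoidAlgebra.single (Pi.single i ε) 1

section Aux

variable (k : Type) [Field k] (n : ℕ) (ε : ℝ≥0)

/-- The monomial ideal of elements all of whose monomials have some exponent `≥ ε`
in a coordinate from `s`. -/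
def Jideal (s : Set (Fin n)) : Ideal (Rn k n) where
  carrier := {f | ∀ a ∈ f.coeff.support, ∃ j ∈ s, ε ≤ a j}
  add_mem' := by
    intro f g hf hg a ha
    rcases Finset.mem_union.mp (Finsupp.support_add ha) with h | h
    exacts [hf a h, hg a h]
  zero_mem' := by simp
  smul_mem' := by
    classical
    intro r f hf a ha
    rw [smul_eq_mul] at ha
    rcases Finset.mem_add.mp (AddMonoidAlgebra.support_coeff_mul_subset r f ha) with ⟨b, _, c, hc, rfl⟩
    obtain ⟨j, hj, hle⟩ := hf c hc
    exact ⟨j, hj, le_trans hle (by simpa using le_add_self)⟩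

lemma mem_Jideal_iff (s : Set (Fin n)) (f : Rn k n) :
    f ∈ Jideal k n ε s ↔ ∀ a ∈ f.coeff.support, ∃ j ∈ s, ε ≤ a j := Iff.rfl

lemma span_eq_Jideal (s : Set (Fin n)) :
    Ideal.span ((fun j => xPow k n j ε) '' s) = Jideal k n ε s := by
  apply le_antisymm
  · rw [Ideal.span_le]
    rintro _ ⟨j, hj, rfl⟩ a ha
    have := Finsupp.support_single_subset ha
    simp only [Finset.mem_singleton] at this
    subst this
    exact ⟨j, hj, by simp⟩
  · intro f hf
    rw [← AddMonoidAlgebra.sum_coeff_single f]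
    refine Ideal.sum_mem _ fun a ha => ?_
    obtain ⟨j, hj, hle⟩ := hf a ha
    have key : Pi.single j ε + (a - Pi.single j ε) = a := by
      funext i
      by_cases hij : i = j
      · subst hij; simp [add_tsub_cancel_of_le hle]
      · simp [Pi.single_eq_of_ne hij]
    have heq : (AddMonoidAlgebra.single a (f.coeff a) : Rn k n) =
        xPow k n j ε * AddMonoidAlgebra.single (a - Pi.single j ε) (f.coeff a) := by
      rw [show xPow k n j ε = AddMonoidAlgebra.single (Pi.single j ε) (1 : k) from rfl,
        AddMonoidAlgebra.single_mul_single, one_mul, key]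
    show (AddMonoidAlgebra.single a (f.coeff a) : Rn k n) ∈ _
    rw [heq]
    exact Ideal.mul_mem_right _ _ (Ideal.subset_span ⟨j, hj, rfl⟩)

lemma Jideal_ne_top (hε : 0 < ε) (s : Set (Fin n)) : Jideal k n ε s ≠ ⊤ := by
  intro h
  have h1 : (1 : Rn k n) ∈ Jideal k n ε s := h ▸ Submodule.mem_top
  have h0 : (0 : Fin n → ℝ≥0) ∈ (1 : Rn k n).coeff.support := by
    rw [Finsupp.mem_support_iff]
    show (Finsupp.single (0 : Fin n → ℝ≥0) (1 : k)) 0 ≠ 0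
    simp
  obtain ⟨j, _, hle⟩ := h1 0 h0
  simp at hle
  exact hε.ne' (le_antisymm (hle ▸ le_refl _) hε.le) |>.elim

lemma Jideal_mul_mem (s : Set (Fin n)) (j : Fin n) (hj : j ∉ s) (f : Rn k n)
    (hf : xPow k n j ε * f ∈ Jideal k n ε s) : f ∈ Jideal k n ε s := by
  intro a ha
  have hsupp : (xPow k n j ε * f).coeff.support = f.coeff.support.map (addLeftEmbedding (Pi.single j ε)) :=
    AddMonoidAlgebra.support_coeff_single_mul f 1 (fun y => by simp) _
  have hmem : Pi.single j ε + a ∈ (xPow k n j ε * f).coeff.support := by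
    rw [hsupp, Finset.mem_map]
    exact ⟨a, ha, rfl⟩
  obtain ⟨l, hl, hle⟩ := hf _ hmem
  have hlj : l ≠ j := fun h => hj (h ▸ hl)
  refine ⟨l, hl, ?_⟩
  simpa [Pi.single_eq_of_ne hlj] using hle

lemma ofList_take_eq (i : ℕ) :
    Ideal.ofList ((List.ofFn fun j => xPow k n j ε).take i) =
      Jideal k n ε {j : Fin n | (j : ℕ) < i} := by
  rw [← span_eq_Jideal]
  have hset : {r | r ∈ (List.ofFn fun j => xPow k n j ε).take i} =
      (fun j => xPow k n j ε) '' {j : Fin n | (j : ℕ) < i} := by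
    ext r
    constructor
    · intro hr
      obtain ⟨m, hm, heq⟩ := List.mem_iff_getElem.mp hr
      simp only [List.length_take, List.length_ofFn, lt_min_iff] at hm
      rw [List.getElem_take, List.getElem_ofFn] at heq
      exact ⟨⟨m, hm.2⟩, hm.1, heq⟩
    · rintro ⟨j, hj, rfl⟩
      apply List.mem_iff_getElem.mpr
      refine ⟨j, ?_, ?_⟩
      · simp only [List.length_take, List.length_ofFn, lt_min_iff]
        exact ⟨hj, j.isLt⟩
      · rw [List.getElem_take, List.getElem_ofFn]
  show Ideal.span _ = _
  rw [hset]

lemma smul_regular_quot (s : Set (Fin n)) (j : Fin n) (hj : j ∉ s) :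
    IsSMulRegular (Rn k n ⧸ (Jideal k n ε s : Submodule (Rn k n) (Rn k n))) (xPow k n j ε) := by
  intro x y hxy
  obtain ⟨u, rfl⟩ := Submodule.Quotient.mk_surjective _ x
  obtain ⟨v, rfl⟩ := Submodule.Quotient.mk_surjective _ y
  have hxy' : xPow k n j ε • (Submodule.Quotient.mk u :
      Rn k n ⧸ (Jideal k n ε s : Submodule (Rn k n) (Rn k n))) =
      xPow k n j ε • Submodule.Quotient.mk v := hxy
  have h0 : xPow k n j ε • (Submodule.Quotient.mk u :
      Rn k n ⧸ (Jideal k n ε s : Submodule (Rn k n) (Rn k n))) -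
      xPow k n j ε • Submodule.Quotient.mk v = 0 := sub_eq_zero.mpr hxy'
  rw [← smul_sub, ← Submodule.Quotient.mk_sub, ← Submodule.Quotient.mk_smul,
    Submodule.Quotient.mk_eq_zero] at h0
  rw [← sub_eq_zero, ← Submodule.Quotient.mk_sub, Submodule.Quotient.mk_eq_zero]
  exact Jideal_mul_mem k n ε s j hj _ (by rwa [smul_eq_mul] at h0)

end Aux

/-- For ε > 0 the sequence x₁^ε, …, xₙ^ε is regular in R = k[ℝ≥0ⁿ]. -/
theorem stmt11 (k : Type) [Field k] (n : ℕ) (ε : ℝ≥0) (hε : 0 < ε) :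
    RingTheory.Sequence.IsRegular (Rn k n) (List.ofFn fun i => xPow k n i ε) := by
  constructor
  · constructor
    intro i h
    rw [List.length_ofFn] at h
    have hsm : (Ideal.ofList ((List.ofFn fun j => xPow k n j ε).take i) •
        (⊤ : Submodule (Rn k n) (Rn k n))) =
        (Jideal k n ε {j : Fin n | (j : ℕ) < i} : Submodule (Rn k n) (Rn k n)) := by
      rw [show Ideal.ofList ((List.ofFn fun j => xPow k n j ε).take i) = Ideal.span _ from rfl,
        Submodule.span_smul_eq, Submodule.set_smul_top_eq_span, ← Ideal.ofList, ofList_take_eq]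
    rw [List.getElem_ofFn]
    rw [hsm]
    exact smul_regular_quot k n ε _ ⟨i, h⟩ (by simp)
  · rw [show Ideal.ofList (List.ofFn fun i => xPow k n i ε) = Ideal.span _ from rfl,
      Submodule.span_smul_eq, Submodule.set_smul_top_eq_span, ← Ideal.ofList]
    have : Ideal.ofList (List.ofFn fun j => xPow k n j ε) =
        Jideal k n ε {j : Fin n | (j : ℕ) < n} := by
      rw [← ofList_take_eq, List.take_of_length_le (by simp)]
    rw [this]
    exact fun h => Jideal_ne_top k n ε hε _ h.symm
end

section
/- Let R = k[ℝ≥0^n] and let R ⊗_k R have variables x₁,…,x_n (from the left factor) and y₁,…,y_n (from the right factor). Then the quotient of R ⊗_k R by the ideal generated by {x_i^ε − y_i^ε : 1 ≤ i ≤ n, ε > 0} is isomorphic as a ring to R. -/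
open scoped NNReal TensorProduct
/-- The ideal ⟨x_i^ε ⊗ 1 − 1 ⊗ x_i^ε : 1 ≤ i ≤ n, ε > 0⟩ of R ⊗ₖ R. -/
noncomputable def diffIdeal (k : Type) [Field k] (n : ℕ) : Ideal (Rn k n ⊗[k] Rn k n) :=
  Ideal.span {f | ∃ (i : Fin n) (ε : ℝ≥0), 0 < ε ∧
    f = xPow k n i ε ⊗ₜ[k] 1 - 1 ⊗ₜ[k] xPow k n i ε}

/-!
The multiplication map `A ⊗ A → A` is surjective, so `A ⊗ A` modulo its kernel is `A`.
That kernel is generated by the elements `a ⊗ 1 - 1 ⊗ a` with `a` in any generating set of the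
algebra `A`: modulo these, the two inclusions `A → A ⊗ A` agree on generators, hence everywhere.
The monomials `x_i^ε` with `ε > 0` generate `k[ℝ≥0ⁿ]`, since the vectors `ε eᵢ` generate `ℝ≥0ⁿ`
as a monoid.
-/

open Algebra TensorProduct

theorem KaehlerDifferential.ideal_le_of_adjoin_eq_top {R S : Type*} [CommRing R] [CommRing S]
    [Algebra R S] {I : Ideal (S ⊗[R] S)} {s : Set S} (hs : adjoin R s = ⊤)
    (hsI : ∀ a ∈ s, a ⊗ₜ[R] (1 : S) - 1 ⊗ₜ[R] a ∈ I) :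
    KaehlerDifferential.ideal R S ≤ I := by
  rw [← KaehlerDifferential.span_range_eq_ideal, Ideal.span_le]
  rintro _ ⟨x, rfl⟩
  have : (Ideal.Quotient.mkₐ R I).comp includeLeft = (Ideal.Quotient.mkₐ R I).comp includeRight :=
    AlgHom.ext_of_adjoin_eq_top hs fun a ha => by
      simpa [Ideal.Quotient.mk_eq_mk_iff_sub_mem] using hsI a ha
  simpa [Ideal.Quotient.mk_eq_mk_iff_sub_mem] using (AlgHom.congr_fun this x).symm

theorem AddMonoidAlgebra.adjoin_image_of'_eq_top {R M : Type*} [CommSemiring R] [AddMonoid M]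
    {S : Set M} (hS : AddSubmonoid.closure S = ⊤) :
    adjoin R (of' R M '' S) = ⊤ := by
  refine eq_top_iff.2 fun f _ => adjoin_le ?_ (mem_adjoin_support f)
  rintro _ ⟨m, -, rfl⟩
  induction hS ▸ AddSubmonoid.mem_top m using AddSubmonoid.closure_induction with
  | mem m hm => exact subset_adjoin ⟨m, hm, rfl⟩
  | zero => exact (adjoin R _).one_mem
  | add m₁ m₂ _ _ h₁ h₂ =>
    rw [of'_apply, ← one_mul (1 : R), ← single_mul_single]
    exact mul_mem h₁ h₂

theorem Pi.addSubmonoidClosure_single_ne_zero {ι : Type*} [Finite ι] [DecidableEq ι]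
    {M : ι → Type*} [∀ i, AddCommMonoid (M i)] :
    AddSubmonoid.closure {f : (i : ι) → M i | ∃ i m, m ≠ 0 ∧ f = Pi.single i m} = ⊤ := by
  refine eq_top_iff.2 fun f _ => Pi.single_induction _ f (zero_mem _) (fun _ _ => add_mem) ?_
  intro i m
  rcases eq_or_ne m 0 with rfl | hm
  · simp
  · exact AddSubmonoid.subset_closure ⟨i, m, hm, rfl⟩

theorem diffIdeal_eq_kaehlerDifferential_ideal (k : Type) [Field k] (n : ℕ) :
    diffIdeal k n = KaehlerDifferential.ideal k (Rn k n) := by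
  refine le_antisymm ?_ (KaehlerDifferential.ideal_le_of_adjoin_eq_top
    (AddMonoidAlgebra.adjoin_image_of'_eq_top Pi.addSubmonoidClosure_single_ne_zero) ?_)
  · rw [diffIdeal, Ideal.span_le]
    rintro _ ⟨i, ε, -, rfl⟩
    simp [RingHom.mem_ker]
  · rintro _ ⟨_, ⟨i, ε, hε, rfl⟩, rfl⟩
    exact Ideal.subset_span ⟨i, ε, pos_iff_ne_zero.2 hε, rfl⟩

/-- (R ⊗ₖ R) / ⟨x_i^ε − y_i^ε : i, ε > 0⟩ ≅ R as rings. -/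
theorem stmt15 (k : Type) [Field k] (n : ℕ) :
    Nonempty (((Rn k n ⊗[k] Rn k n) ⧸ diffIdeal k n) ≃+* Rn k n) := by
  rw [diffIdeal_eq_kaehlerDifferential_ideal]
  exact ⟨(Ideal.quotientKerAlgEquivOfSurjective (f := lmul' k (S := Rn k n))
    fun a => ⟨a ⊗ₜ 1, by simp⟩).toRingEquiv⟩
end

section
/- In R₁ ⊗_k R₁ = k[ℝ≥0²] with variables x and y, the quotient by the ideal ⟨x^ε − y^ε : ε > 0⟩ is isomorphic to R₁ = k[ℝ≥0] via the map sending both x^a and y^a to x^a. -/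
open scoped NNReal TensorProduct
/-- The ideal ⟨x^ε ⊗ 1 − 1 ⊗ x^ε : ε > 0⟩ of R₁ ⊗ₖ R₁. -/
noncomputable def diffIdeal1 (k : Type) [Field k] : Ideal (R1 k ⊗[k] R1 k) :=
  Ideal.span {f | ∃ ε : ℝ≥0, 0 < ε ∧
    f = (AddMonoidAlgebra.single ε 1 : R1 k) ⊗ₜ[k] 1 -
        1 ⊗ₜ[k] (AddMonoidAlgebra.single ε 1 : R1 k)}

/-!
The ideal is the kernel of the multiplication map `μ : R₁ ⊗ R₁ → R₁`, so the quotient is `R₁`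
by the first isomorphism theorem. The kernel of `μ` is generated by the `s ⊗ 1 - 1 ⊗ s`; modulo
an ideal `I` these all vanish as soon as the two inclusions `R₁ → (R₁ ⊗ R₁)/I` agree, and for
a monoid algebra that only has to be checked on the monomials `x^a`. For `a = 0` the monomial is
`1`, and for `a > 0` the difference `x^a ⊗ 1 - 1 ⊗ x^a` is a generator of the ideal.
-/

open Algebra.TensorProduct

namespace KaehlerDifferential

variable (R S : Type*) [CommRing R] [CommRing S] [Algebra R S]

theorem ideal_le_iff {I : Ideal (S ⊗[R] S)} :
    ideal R S ≤ I ↔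
      (Ideal.Quotient.mkₐ R I).comp includeLeft = (Ideal.Quotient.mkₐ R I).comp includeRight := by
  simp only [← span_range_eq_ideal, Ideal.span_le, Set.range_subset_iff, SetLike.mem_coe,
    ← Ideal.Quotient.eq, AlgHom.ext_iff, AlgHom.comp_apply, Ideal.Quotient.mkₐ_eq_mk,
    includeLeft_apply, includeRight_apply, eq_comm]

noncomputable def quotientIdealAlgEquiv : (S ⊗[R] S ⧸ ideal R S) ≃ₐ[R] S :=
  Ideal.quotientKerAlgEquivOfRightInverse (g := includeLeft (S := R)) fun s => by simp

@[simp]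
theorem quotientIdealAlgEquiv_mk_tmul (s t : S) :
    quotientIdealAlgEquiv R S (Ideal.Quotient.mk _ (s ⊗ₜ t)) = s * t :=
  lmul'_apply_tmul (R := R) s t

end KaehlerDifferential

theorem mk_single_tmul_one_eq_mk_one_tmul_single (k : Type) [Field k] (a : ℝ≥0) :
    Ideal.Quotient.mk (diffIdeal1 k) ((AddMonoidAlgebra.single a 1 : R1 k) ⊗ₜ[k] 1) =
      Ideal.Quotient.mk (diffIdeal1 k) (1 ⊗ₜ[k] (AddMonoidAlgebra.single a 1 : R1 k)) := by
  rcases (zero_le (a := a)).eq_or_lt with rfl | ha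
  · rfl
  · exact Ideal.Quotient.eq.2 (Ideal.subset_span ⟨a, ha, rfl⟩)

theorem diffIdeal1_eq_kaehlerDifferential_ideal (k : Type) [Field k] :
    diffIdeal1 k = KaehlerDifferential.ideal k (R1 k) := by
  refine le_antisymm ?_ ((KaehlerDifferential.ideal_le_iff k (R1 k)).2 ?_)
  · refine Ideal.span_le.2 ?_
    rintro _ ⟨ε, -, rfl⟩
    simp [RingHom.mem_ker]
  · exact AddMonoidAlgebra.algHom_ext (mk_single_tmul_one_eq_mk_one_tmul_single k)
      (Subsingleton.elim _ _)

/-- (R₁ ⊗ₖ R₁)/⟨x^ε − y^ε : ε > 0⟩ ≅ R₁ via x^a ↦ x^a and y^a ↦ x^a. -/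
theorem stmt16 (k : Type) [Field k] :
    ∃ e : ((R1 k ⊗[k] R1 k) ⧸ diffIdeal1 k) ≃+* R1 k,
      ∀ a : ℝ≥0,
        e (Ideal.Quotient.mk (diffIdeal1 k)
            ((AddMonoidAlgebra.single a 1 : R1 k) ⊗ₜ[k] 1)) =
          AddMonoidAlgebra.single a 1 ∧
        e (Ideal.Quotient.mk (diffIdeal1 k)
            (1 ⊗ₜ[k] (AddMonoidAlgebra.single a 1 : R1 k))) =
          AddMonoidAlgebra.single a 1 := by
  refine ⟨(Ideal.quotEquivOfEq (diffIdeal1_eq_kaehlerDifferential_ideal k)).trans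
    (KaehlerDifferential.quotientIdealAlgEquiv k (R1 k)).toRingEquiv, fun a => ⟨?_, ?_⟩⟩ <;>
  simp
end

section
/- Let G ⊆ ℝ be a subgroup that is dense in ℝ, let G₊ = G ∩ ℝ≥0, and let R_G = k[G₊] be its monoid algebra over a field k. Then the graded maximal ideal m = ⟨x^a : a ∈ G₊, a > 0⟩ is the directed union of the principal ideals ⟨x^ε⟩ for ε ∈ G, ε > 0, and is a flat, non-finitely-generated R_G-module. -/
/-- The positive cone G₊ = G ∩ ℝ≥0 of an additive subgroup G of ℝ, as a submonoid. -/
def posCone (G : AddSubgroup ℝ) : AddSubmonoid ℝ where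
  carrier := {x | x ∈ G ∧ 0 ≤ x}
  zero_mem' := ⟨G.zero_mem, le_refl 0⟩
  add_mem' := fun h h' => ⟨G.add_mem h.1 h'.1, add_nonneg h.2 h'.2⟩
/-- The monoid algebra R_G = k[G₊]. -/
abbrev RG (k : Type) [Field k] (G : AddSubgroup ℝ) := AddMonoidAlgebra k (posCone G)
/-- The graded maximal ideal m = ⟨x^a : a ∈ G₊, a > 0⟩ of R_G. -/
noncomputable def mG (k : Type) [Field k] (G : AddSubgroup ℝ) : Ideal (RG k G) :=
  Ideal.span {f | ∃ a : posCone G, 0 < (a : ℝ) ∧ f = AddMonoidAlgebra.single a 1}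

lemma posCone_mem_iff (G : AddSubgroup ℝ) (x : ℝ) :
    x ∈ posCone G ↔ x ∈ G ∧ 0 ≤ x := Iff.rfl

lemma single_mem_span_single (k : Type) [Field k] (G : AddSubgroup ℝ)
    (a b : posCone G) (h : (b : ℝ) ≤ (a : ℝ)) :
    (AddMonoidAlgebra.single a (1:k) : RG k G) ∈
      Ideal.span {(AddMonoidAlgebra.single b 1 : RG k G)} := by
  have hab : ((a : ℝ) - b) ∈ posCone G :=
    ⟨G.sub_mem a.2.1 b.2.1, sub_nonneg.2 h⟩
  refine Ideal.mem_span_singleton'.2 ⟨AddMonoidAlgebra.single ⟨(a : ℝ) - b, hab⟩ 1, ?_⟩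
  rw [AddMonoidAlgebra.single_mul_single, one_mul]
  congr 1
  ext
  simp

lemma mG_eq_iSup (k : Type) [Field k] (G : AddSubgroup ℝ) :
    mG k G = ⨆ ε : {a : posCone G // 0 < (a : ℝ)},
      Ideal.span {(AddMonoidAlgebra.single (ε : posCone G) 1 : RG k G)} := by
  apply le_antisymm
  · rw [mG, Ideal.span_le]
    rintro f ⟨a, ha, rfl⟩
    exact Submodule.mem_iSup_of_mem ⟨a, ha⟩ (Ideal.subset_span rfl)
  · refine iSup_le fun ε => Ideal.span_le.2 ?_
    rintro f rfl
    exact Ideal.subset_span ⟨ε.1, ε.2, rfl⟩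

lemma mG_directed (k : Type) [Field k] (G : AddSubgroup ℝ) :
    Directed (· ≤ ·) (fun ε : {a : posCone G // 0 < (a : ℝ)} =>
      Ideal.span {(AddMonoidAlgebra.single (ε : posCone G) 1 : RG k G)}) := by
  intro ε₁ ε₂
  rcases le_total ((ε₁ : posCone G) : ℝ) ((ε₂ : posCone G) : ℝ) with h | h
  · exact ⟨ε₁, le_refl _, Ideal.span_le.2 (Set.singleton_subset_iff.2
      (single_mem_span_single k G _ _ h))⟩
  · exact ⟨ε₂, Ideal.span_le.2 (Set.singleton_subset_iff.2
      (single_mem_span_single k G _ _ h)), le_refl _⟩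

lemma single_mem_mG (k : Type) [Field k] (G : AddSubgroup ℝ)
    (a : posCone G) (ha : 0 < (a : ℝ)) :
    (AddMonoidAlgebra.single a (1:k) : RG k G) ∈ mG k G :=
  Ideal.subset_span ⟨a, ha, rfl⟩

lemma single_ne_zero'_s17 (k : Type) [Field k] (G : AddSubgroup ℝ) (a : posCone G) :
    (AddMonoidAlgebra.single a (1:k) : RG k G) ≠ 0 :=
  fun h => one_ne_zero (AddMonoidAlgebra.single_eq_zero.1 h)

/-- Anything in the principal ideal (x^δ) has all exponents ≥ δ. -/
lemma span_single_support (k : Type) [Field k] (G : AddSubgroup ℝ)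
    (δ : posCone G) (f : RG k G) (hf : f ∈ Ideal.span {(AddMonoidAlgebra.single δ 1 : RG k G)})
    (b : posCone G) (hb : b ∈ f.coeff.support) : (δ : ℝ) ≤ (b : ℝ) := by
  classical
  obtain ⟨g, rfl⟩ := Ideal.mem_span_singleton'.1 hf
  have h := AddMonoidAlgebra.support_coeff_mul_subset g (AddMonoidAlgebra.single δ (1:k)) hb
  rw [Finset.mem_add] at h
  obtain ⟨c, hc, d, hd, rfl⟩ := h
  have hd' : d = δ := by
    have := Finsupp.support_single_subset hd
    simpa using this
  have h0 : (0:ℝ) ≤ (c : ℝ) := c.2.2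
  have hcoe : ((c + d : posCone G) : ℝ) = (c : ℝ) + (d : ℝ) := rfl
  rw [hcoe, hd']
  linarith

/-- If G is dense in ℝ then m is the directed union of the principal ideals ⟨x^ε⟩
for positive ε ∈ G, and m is flat but not finitely generated over R_G. -/
theorem stmt17 (k : Type) [Field k] (G : AddSubgroup ℝ)
    (hdense : Dense (G : Set ℝ)) :
    (mG k G = ⨆ ε : {a : posCone G // 0 < (a : ℝ)},
        Ideal.span {(AddMonoidAlgebra.single (ε : posCone G) 1 : RG k G)}) ∧
    Directed (· ≤ ·) (fun ε : {a : posCone G // 0 < (a : ℝ)} =>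
      Ideal.span {(AddMonoidAlgebra.single (ε : posCone G) 1 : RG k G)}) ∧
    Module.Flat (RG k G) (mG k G) ∧ ¬ (mG k G).FG := by
  classical
  obtain ⟨ε₀, hε₀G, hε₀pos, -⟩ := hdense.exists_between (show (0:ℝ) < 1 by norm_num)
  have hNE : Nonempty {a : posCone G // 0 < (a : ℝ)} :=
    ⟨⟨⟨ε₀, hε₀G, le_of_lt hε₀pos⟩, hε₀pos⟩⟩
  refine ⟨mG_eq_iSup k G, mG_directed k G, ?_, ?_⟩
  · -- Flatness
    apply Module.Flat.of_forall_isTrivialRelation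
    intro ι f x hsum
    rcases isEmpty_or_nonempty (Fin ι) with hι | hι
    · exact ⟨0, fun i => (hι.false i).elim, fun j => j.elim0,
        fun i => (hι.false i).elim, fun j => j.elim0⟩
    · -- pick for each i an ε i with x i in span {x^{ε i}}
      have hmem : ∀ i, ∃ ε : {a : posCone G // 0 < (a : ℝ)},
          ((x i : RG k G)) ∈ Ideal.span {(AddMonoidAlgebra.single (ε : posCone G) 1 : RG k G)} := by
        intro i
        have h2 : ((x i : RG k G)) ∈ ⨆ ε : {a : posCone G // 0 < (a : ℝ)},
            Ideal.span {(AddMonoidAlgebra.single (ε : posCone G) 1 : RG k G)} := by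
          rw [← mG_eq_iSup k G]; exact (x i).2
        exact (Submodule.mem_iSup_of_directed _ (mG_directed k G)).1 h2
      choose ε hε using hmem
      obtain ⟨i₀, -, hmin⟩ := Finset.exists_min_image Finset.univ
        (fun i => (((ε i : {a : posCone G // 0 < (a : ℝ)}) : posCone G) : ℝ))
        ⟨Classical.arbitrary (Fin ι), Finset.mem_univ _⟩
      set δ : {a : posCone G // 0 < (a : ℝ)} := ε i₀ with hδ
      have hx : ∀ i, ((x i : RG k G)) ∈
          Ideal.span {(AddMonoidAlgebra.single (δ : posCone G) 1 : RG k G)} := by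
        intro i
        refine Ideal.span_le.2 (Set.singleton_subset_iff.2
          (single_mem_span_single k G _ _ (hmin i (Finset.mem_univ i)))) (hε i)
      choose c hc using fun i => Ideal.mem_span_singleton'.1 (hx i)
      have hy : (AddMonoidAlgebra.single (δ : posCone G) (1:k) : RG k G) ∈ mG k G :=
        single_mem_mG k G _ δ.2
      have hrel : (∑ i, f i * c i) = 0 := by
        have hsum' : ∑ i, f i • ((x i : RG k G)) = 0 := by
          have := congrArg (Submodule.subtype (mG k G)) hsum
          simpa using this
        have : (∑ i, f i * c i) * (AddMonoidAlgebra.single (δ : posCone G) (1:k) : RG k G) = 0 := by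
          rw [Finset.sum_mul]
          rw [← hsum']
          refine Finset.sum_congr rfl fun i _ => ?_
          rw [mul_assoc, hc i, smul_eq_mul]
        rcases mul_eq_zero.1 this with h | h
        · exact h
        · exact absurd h (single_ne_zero'_s17 k G _)
      refine ⟨1, fun i _ => c i, fun _ => ⟨_, hy⟩, fun i => ?_, fun j => ?_⟩
      · refine Subtype.ext ?_
        simpa using (hc i).symm
      · simpa using hrel
  · -- not finitely generated
    intro hFG
    have hcomp := (Submodule.fg_iff_compact (mG k G)).1 hFG
    rw [CompleteLattice.isCompactElement_iff_le_of_directed_sSup_le] at hcomp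
    obtain ⟨I, hIr, hle⟩ := hcomp
      (Set.range (fun ε : {a : posCone G // 0 < (a : ℝ)} =>
        Ideal.span {(AddMonoidAlgebra.single (ε : posCone G) 1 : RG k G)}))
      (Set.range_nonempty _) ((mG_directed k G).directedOn_range)
      (by rw [sSup_range]; exact (mG_eq_iSup k G).le)
    obtain ⟨δ, rfl⟩ := hIr
    -- density: find 0 < δ' < δ in G
    obtain ⟨δ', hδ'G, hδ'pos, hδ'lt⟩ := hdense.exists_between δ.2
    set b : posCone G := ⟨δ', hδ'G, le_of_lt hδ'pos⟩ with hb
    have hbmem : (AddMonoidAlgebra.single b (1:k) : RG k G) ∈ mG k G :=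
      single_mem_mG k G b hδ'pos
    have hsupp : b ∈ (AddMonoidAlgebra.single b (1:k) : RG k G).coeff.support :=
      Finsupp.mem_support_iff.2 (by simp)
    have := span_single_support k G δ _ (hle hbmem) b hsupp
    have : ((δ : posCone G) : ℝ) ≤ δ' := this
    linarith
end

section
/- For the one-variable real-exponent polynomial ring R₁ and its residue field k = R₁/m₁, one has Tor^{R₁}_1(k, k) ≅ m₁/m₁² = 0 and Tor^{R₁}_i(k, k) = 0 for all i ≥ 1, even though k is not a flat (nor projective) R₁-module. -/
open scoped NNReal
open CategoryTheory
set_option maxHeartbeats 1000000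
set_option synthInstance.maxHeartbeats 400000

/-- Tor over R₁ computed in ModuleCat R₁. -/
noncomputable def TorMod (k : Type) [Field k] (n : ℕ)
    (M N : ModuleCat (R1 k)) : ModuleCat (R1 k) :=
  ((Tor (ModuleCat (R1 k)) n).obj M).obj N
/-- The residue field k = R₁/m₁ as an object of ModuleCat R₁. -/
noncomputable def resField (k : Type) [Field k] : ModuleCat (R1 k) :=
  ModuleCat.of (R1 k) (R1 k ⧸ m1 k)

namespace St19

variable (k : Type) [Field k]

/-- generators -/
noncomputable def g (n : ℕ) : R1 k := AddMonoidAlgebra.single ((n+1 : ℝ≥0))⁻¹ 1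
/-- transition elements -/
noncomputable def t (n : ℕ) : R1 k :=
  AddMonoidAlgebra.single ((n+1 : ℝ≥0)⁻¹ - (n+2 : ℝ≥0)⁻¹) 1

lemma inv_succ_pos (n : ℕ) : (0:ℝ≥0) < (n+1 : ℝ≥0)⁻¹ := by positivity

lemma inv_lt (n : ℕ) : (n+2 : ℝ≥0)⁻¹ < (n+1 : ℝ≥0)⁻¹ := by
  rw [inv_lt_inv₀ (by positivity)]
  · norm_num
  · positivity

lemma g_mem (n : ℕ) : g k n ∈ m1 k :=
  Ideal.subset_span ⟨_, inv_succ_pos n, rfl⟩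

lemma t_mem (n : ℕ) : t k n ∈ m1 k :=
  Ideal.subset_span ⟨_, tsub_pos_of_lt (inv_lt n), rfl⟩

lemma t_mul_g (n : ℕ) : t k n * g k (n+1) = g k n := by
  rw [t, g, g, AddMonoidAlgebra.single_mul_single, one_mul]
  congr 1
  have h2 : ((n:ℝ≥0) + 1 + 1) = (n + 2 : ℝ≥0) := by push_cast; ring
  push_cast
  rw [h2, tsub_add_cancel_of_le (inv_lt n).le]

lemma single_pos_mem (a : ℝ≥0) (ha : 0 < a) (c : k) :
    (AddMonoidAlgebra.single a c : R1 k) ∈ m1 k := by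
  have : (AddMonoidAlgebra.single a c : R1 k)
      = (AddMonoidAlgebra.single 0 c : R1 k) * AddMonoidAlgebra.single a 1 := by
    rw [AddMonoidAlgebra.single_mul_single, zero_add, mul_one]
  rw [this]
  exact Ideal.mul_mem_left _ _ (Ideal.subset_span ⟨a, ha, rfl⟩)

/-- m1 is the span of the g's -/
lemma m1_eq_span : m1 k = Ideal.span (Set.range (g k)) := by
  apply le_antisymm
  · rw [m1, Ideal.span_le]
    rintro f ⟨a, ha, rfl⟩
    obtain ⟨n, hn⟩ := exists_nat_gt a⁻¹
    have hle : ((n+1 : ℝ≥0))⁻¹ ≤ a := by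
      rw [inv_le_comm₀ (by positivity) ha]
      calc a⁻¹ ≤ n := hn.le
      _ ≤ n+1 := by norm_num
    have : (AddMonoidAlgebra.single a 1 : R1 k)
        = AddMonoidAlgebra.single (a - (n+1 : ℝ≥0)⁻¹) 1 * g k n := by
      rw [g, AddMonoidAlgebra.single_mul_single, one_mul, tsub_add_cancel_of_le hle]
    rw [this]
    exact Ideal.mul_mem_left _ _ (Ideal.subset_span ⟨n, rfl⟩)
  · rw [Ideal.span_le]
    rintro f ⟨n, rfl⟩
    exact g_mem k n

/-- the character sending single a c to 0 for a > 0 -/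
noncomputable def φ : R1 k →ₐ[k] k :=
  AddMonoidAlgebra.lift k k ℝ≥0
    { toFun := fun a => if Multiplicative.toAdd a = 0 then 1 else 0
      map_one' := by simp
      map_mul' := by
        intro a b
        simp only [toAdd_mul]
        rcases eq_or_ne (Multiplicative.toAdd a) 0 with ha | ha <;>
          rcases eq_or_ne (Multiplicative.toAdd b) 0 with hb | hb <;>
          simp [ha, hb, add_eq_zero, *] }

lemma φ_single (a : ℝ≥0) (c : k) :
    φ k (AddMonoidAlgebra.single a c) = if a = 0 then c else 0 := by
  rw [φ]
  rw [AddMonoidAlgebra.lift_single]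
  simp only [MonoidHom.coe_mk, OneHom.coe_mk]
  simp only [toAdd_ofAdd]
  split_ifs <;> simp [*]

lemma m1_le_ker : m1 k ≤ RingHom.ker (φ k).toRingHom := by
  rw [m1, Ideal.span_le]
  rintro f ⟨a, ha, rfl⟩
  simp [RingHom.mem_ker, φ_single, ha.ne']

lemma one_not_mem_m1 : (1 : R1 k) ∉ m1 k := by
  intro h
  have := m1_le_ker k h
  rw [RingHom.mem_ker] at this
  simp at this

lemma m1_ne_top : m1 k ≠ ⊤ := fun h => one_not_mem_m1 k (h ▸ Submodule.mem_top)

/-- m1 is idempotent -/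
lemma m1_sq : m1 k ^ 2 = m1 k := by
  apply le_antisymm
  · rw [pow_two]
    exact Ideal.mul_le_left
  · rw [m1, Ideal.span_le]
    rintro f ⟨a, ha, rfl⟩
    have : (AddMonoidAlgebra.single a 1 : R1 k)
        = AddMonoidAlgebra.single (a/2) 1 * AddMonoidAlgebra.single (a/2) 1 := by
      rw [AddMonoidAlgebra.single_mul_single, one_mul]
      congr 1
      rw [← two_mul]
      field_simp
    rw [this, pow_two]
    have h2 : (0:ℝ≥0) < a/2 := by positivity
    exact Ideal.mul_mem_mul (Ideal.subset_span ⟨_, h2, rfl⟩) (Ideal.subset_span ⟨_, h2, rfl⟩)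

instance cotangent_subsingleton : Subsingleton (m1 k).Cotangent := by
  refine subsingleton_of_forall_eq 0 fun x => ?_
  obtain ⟨y, rfl⟩ := Ideal.toCotangent_surjective (m1 k) x
  rw [Ideal.toCotangent_eq_zero, m1_sq]
  exact y.2

noncomputable def d1 : (ℕ →₀ R1 k) →ₗ[R1 k] R1 k :=
  Finsupp.linearCombination (R1 k) (g k)

noncomputable def d2 : (ℕ →₀ R1 k) →ₗ[R1 k] (ℕ →₀ R1 k) :=
  Finsupp.lsum (R1 k) fun n =>
    (Finsupp.lsingle n : R1 k →ₗ[R1 k] (ℕ →₀ R1 k))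
      - (Finsupp.lsingle (n+1)).comp (LinearMap.mulLeft (R1 k) (t k n))

lemma d1_single (n : ℕ) (r : R1 k) : d1 k (Finsupp.single n r) = r * g k n := by
  simp [d1, Finsupp.linearCombination_single, smul_eq_mul]

lemma d2_single (n : ℕ) (r : R1 k) :
    d2 k (Finsupp.single n r) = Finsupp.single n r - Finsupp.single (n+1) (t k n * r) := by
  simp [d2, LinearMap.mulLeft_apply]

lemma range_d1 : LinearMap.range (d1 k) = Submodule.restrictScalars (R1 k) (m1 k) := by
  rw [d1, Finsupp.range_linearCombination, m1_eq_span]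
  rfl

lemma d1_comp_d2 : (d1 k).comp (d2 k) = 0 := by
  ext n
  simp only [LinearMap.comp_apply, LinearMap.zero_apply]
  rw [Finsupp.lsingle_apply, d2_single, map_sub, d1_single, d1_single, one_mul,
    mul_comm (t k n) 1, one_mul, mul_comm, ← t_mul_g k n]
  ring

lemma d2_coeff_zero (y : ℕ →₀ R1 k) : (d2 k y) 0 = y 0 := by
  induction y using Finsupp.induction_linear with
  | zero => simp
  | add f h hf hh => simp [hf, hh]
  | single n r =>
    rw [d2_single]
    rcases n with _ | n <;> simp

lemma d2_coeff_succ (y : ℕ →₀ R1 k) (n : ℕ) :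
    (d2 k y) (n+1) = y (n+1) - t k n * y n := by
  induction y using Finsupp.induction_linear with
  | zero => simp
  | add f h hf hh => simp [hf, hh]; ring
  | single m r =>
    rw [d2_single]
    simp only [Finsupp.sub_apply, Finsupp.single_apply]
    by_cases hm : m = n
    · subst hm
      simp [(by omega : ¬ (m = m+1))]
    · have h2 : ¬ (m + 1 = n + 1) := by omega
      simp [hm, h2]

lemma g_ne_zero (n : ℕ) : g k n ≠ 0 := by
  rw [g]
  intro h
  have := AddMonoidAlgebra.single_eq_zero.mp h
  exact one_ne_zero this

lemma d2_injective : Function.Injective (d2 k) := by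
  rw [injective_iff_map_eq_zero]
  intro y hy
  have h0 : y 0 = 0 := by
    have := d2_coeff_zero k y
    rw [hy] at this
    simpa using this.symm
  have hstep : ∀ n, y n = 0 → y (n+1) = 0 := by
    intro n hn
    have := d2_coeff_succ k y n
    rw [hy, hn, mul_zero] at this
    simpa using this.symm
  refine Finsupp.ext fun n => ?_
  induction n with
  | zero => exact h0
  | succ n ih => exact hstep n ih

lemma exact_middle (y : ℕ →₀ R1 k) (hy : d1 k y = 0) : ∃ x, d2 k x = y := by
  classical
  let p : ℕ → R1 k := fun n => Nat.rec (y 0) (fun n pn => y (n+1) + t k n * pn) n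
  have hp0 : p 0 = y 0 := rfl
  have hps : ∀ n, p (n+1) = y (n+1) + t k n * p n := fun n => rfl
  set N := y.support.sup id + 1 with hN
  have hyN : ∀ m, N ≤ m → y m = 0 := by
    intro m hm
    by_contra h
    have hmem : m ∈ y.support := Finsupp.mem_support_iff.mpr h
    have : m ≤ y.support.sup id := Finset.le_sup (f := id) hmem
    omega
  have hsum : ∀ n, p n * g k n = (Finset.range (n+1)).sum fun m => y m * g k m := by
    intro n
    induction n with
    | zero => simp [hp0]
    | succ n ih =>
      rw [Finset.sum_range_succ, ← ih, hps]
      have h3 : t k n * p n * g k (n+1) = p n * g k n := by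
        rw [mul_comm (t k n) (p n), mul_assoc, t_mul_g]
      rw [add_mul, h3, add_comm]
  have hd1 : ∀ n, N ≤ n + 1 → (Finset.range (n+1)).sum (fun m => y m * g k m) = 0 := by
    intro n hn
    have hsub : y.support ⊆ Finset.range (n+1) := by
      intro m hm
      rw [Finset.mem_range]
      have : m ≤ y.support.sup id := Finset.le_sup (f := id) hm
      omega
    calc (Finset.range (n+1)).sum (fun m => y m * g k m)
        = y.support.sum (fun m => y m * g k m) := by
          refine (Finset.sum_subset hsub ?_).symm
          intro m _ hm
          rw [Finsupp.notMem_support_iff.mp hm, zero_mul]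
      _ = d1 k y := by
          rw [d1, Finsupp.linearCombination_apply, Finsupp.sum]
          exact Finset.sum_congr rfl fun m _ => (smul_eq_mul _ _).symm
      _ = 0 := hy
  have hpz : ∀ n, N ≤ n → p n = 0 := by
    intro n hn
    have h1 : p n * g k n = 0 := by rw [hsum, hd1 n (by omega)]
    rcases mul_eq_zero.mp h1 with h | h
    · exact h
    · exact absurd h (g_ne_zero k n)
  refine ⟨Finsupp.onFinset (Finset.range N) p ?_, ?_⟩
  · intro m hm
    rw [Finset.mem_range]
    by_contra h
    exact hm (hpz m (by omega))
  · refine Finsupp.ext fun n => ?_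
    rcases n with _ | n
    · rw [d2_coeff_zero]
      simpa using hp0
    · rw [d2_coeff_succ]
      simp only [Finsupp.onFinset_apply]
      rw [hps]
      ring

noncomputable def Xc : ℕ → ModuleCat (R1 k)
  | 0 => ModuleCat.of (R1 k) (R1 k)
  | 1 => ModuleCat.of (R1 k) (ℕ →₀ R1 k)
  | 2 => ModuleCat.of (R1 k) (ℕ →₀ R1 k)
  | (_+3) => ModuleCat.of (R1 k) PUnit.{1}

noncomputable def dc : ∀ n : ℕ, Xc k (n+1) ⟶ Xc k n
  | 0 => ModuleCat.ofHom (d1 k)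
  | 1 => ModuleCat.ofHom (d2 k)
  | (_+2) => 0

lemma sq : ∀ n : ℕ, dc k (n+1) ≫ dc k n = 0 := by
  rintro (_ | _ | n)
  · show ModuleCat.ofHom (d2 k) ≫ ModuleCat.ofHom (d1 k) = 0
    have : ModuleCat.ofHom (d2 k) ≫ ModuleCat.ofHom (d1 k)
        = ModuleCat.ofHom ((d1 k).comp (d2 k)) := rfl
    rw [this, d1_comp_d2]
    rfl
  · show (0 : Xc k 3 ⟶ Xc k 2) ≫ _ = 0
    simp
  · show (0 : Xc k (n+4) ⟶ Xc k (n+3)) ≫ _ = 0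
    simp

noncomputable def cpx : ChainComplex (ModuleCat (R1 k)) ℕ :=
  ChainComplex.of (Xc k) (dc k) (sq k)

lemma cpx_d (n : ℕ) : (cpx k).d (n+1) n = dc k n :=
  ChainComplex.of_d _ _ _

instance cpx_projective (n : ℕ) : Projective ((cpx k).X n) := by
  have h0 : Projective (ModuleCat.of (R1 k) (R1 k)) :=
    ModuleCat.projective_of_free (Module.Basis.singleton PUnit.{1} (R1 k))
  have h1 : Projective (ModuleCat.of (R1 k) (ℕ →₀ R1 k)) :=
    ModuleCat.projective_of_free (Finsupp.basisSingleOne (R := R1 k) (ι := ℕ))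
  have h2 : Projective (ModuleCat.of (R1 k) PUnit) :=
    ModuleCat.projective_of_free (Module.Basis.empty (ι := Empty) (PUnit.{1}))
  show Projective (Xc k n)
  rcases n with _ | _ | _ | n <;> assumption

lemma mkQ_comp_d1 : ∀ y, (m1 k).mkQ (d1 k y) = 0 := by
  intro y
  rw [← LinearMap.mem_ker, Submodule.ker_mkQ]
  have : d1 k y ∈ LinearMap.range (d1 k) := LinearMap.mem_range_self _ y
  rw [range_d1] at this
  exact this

noncomputable def π0 : Xc k 0 ⟶ (resField k) := ModuleCat.ofHom (m1 k).mkQ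

noncomputable def PRes : ProjectiveResolution (resField k) where
  complex := cpx k
  projective := cpx_projective k
  π := (ChainComplex.toSingle₀Equiv _ _).symm
    ⟨π0 k, by
      have : (cpx k).d 1 0 = dc k 0 := cpx_d k 0
      rw [this]
      apply ModuleCat.hom_ext
      apply LinearMap.ext
      intro y
      exact mkQ_comp_d1 k y⟩
  quasiIso := ⟨fun n => by
    cases n with
    | zero =>
      rw [ChainComplex.quasiIsoAt₀_iff, ShortComplex.quasiIso_iff_of_zeros']
      rotate_left
      · rfl
      · rfl
      · rfl
      have hτ : ((HomologicalComplex.shortComplexFunctor' (ModuleCat (R1 k))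
          (ComplexShape.down ℕ) 1 0 0).map
          (((cpx k).toSingle₀Equiv (resField k)).symm ⟨π0 k, by
            have : (cpx k).d 1 0 = dc k 0 := cpx_d k 0
            rw [this]
            apply ModuleCat.hom_ext
            apply LinearMap.ext
            intro y
            exact mkQ_comp_d1 k y⟩)).τ₂ = π0 k :=
        ChainComplex.toSingle₀Equiv_symm_apply_f_zero _ _
      constructor
      · rw [ShortComplex.moduleCat_exact_iff]
        intro x hx
        have hx2 : π0 k x = 0 := by
          rw [← hτ]
          exact hx
        have hx3 : Submodule.Quotient.mk x = (0 : R1 k ⧸ m1 k) := hx2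
        have hm : x ∈ m1 k := (Submodule.Quotient.mk_eq_zero _).mp hx3
        have hm2 : x ∈ LinearMap.range (d1 k) := by
          rw [range_d1]
          exact hm
        obtain ⟨y, hy⟩ := hm2
        refine ⟨y, ?_⟩
        show ((cpx k).d 1 0) y = x
        rw [cpx_d]
        exact hy
      · rw [ModuleCat.epi_iff_surjective, hτ]
        exact (Submodule.Quotient.mk_surjective (m1 k) :)
    | succ n =>
      rw [quasiIsoAt_iff_exactAt']
      · rw [HomologicalComplex.exactAt_iff' _ (n+2) (n+1) n (by simp) (by simp),
          ShortComplex.moduleCat_exact_iff]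
        intro x hx
        rcases n with _ | _ | n
        · -- exactness at 1
          have hx1 : ((cpx k).d 1 0) x = 0 := hx
          rw [cpx_d] at hx1
          have hx' : d1 k x = 0 := hx1
          obtain ⟨y, hy⟩ := exact_middle k x hx'
          refine ⟨y, ?_⟩
          show ((cpx k).d 2 1) y = x
          rw [cpx_d]
          exact hy
        · -- exactness at 2
          have hx1 : ((cpx k).d 2 1) x = 0 := hx
          rw [cpx_d] at hx1
          have hx' : d2 k x = 0 := hx1
          have hx0 : x = 0 := d2_injective k (by rw [hx']; exact (map_zero _).symm)
          exact ⟨0, by rw [map_zero, hx0]⟩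
        · -- exactness at n+3 : middle is PUnit
          have : Subsingleton ((HomologicalComplex.sc' (cpx k) (n+4) (n+3) (n+2)).X₂) := by
            show Subsingleton (Xc k (n+3))
            show Subsingleton PUnit.{1}
            infer_instance
          exact ⟨0, Subsingleton.elim _ _⟩
      · apply ChainComplex.exactAt_succ_single_obj⟩


section Tensor

open MonoidalCategory

lemma smul_quot_zero (r : R1 k) (hr : r ∈ m1 k) (c : R1 k ⧸ m1 k) : r • c = 0 := by
  obtain ⟨c, rfl⟩ := Submodule.Quotient.mk_surjective _ c
  rw [← Submodule.Quotient.mk_smul, Submodule.Quotient.mk_eq_zero]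
  exact Ideal.mul_mem_right c _ hr

/-- the functor `resField k ⊗ -` -/
noncomputable def Fk : ModuleCat (R1 k) ⥤ ModuleCat (R1 k) :=
  (tensoringLeft (ModuleCat (R1 k))).obj (resField k)

instance : (Fk k).Additive := by
  unfold Fk
  infer_instance

lemma whisker_d2_apply
    (z : (Fk k).obj (ModuleCat.of (R1 k) (ℕ →₀ R1 k))) :
    (Fk k).map (ModuleCat.ofHom (d2 k)) z = z := by
  show ((resField k) ◁ (ModuleCat.ofHom (d2 k))) z = z
  induction z using TensorProduct.induction_on with
  | zero => simp
  | add x y hx hy => rw [map_add, hx, hy]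
  | tmul m y =>
    induction y using Finsupp.induction_linear with
    | zero => rw [TensorProduct.tmul_zero, map_zero]
    | add f h hf hh => rw [TensorProduct.tmul_add, map_add, hf, hh]
    | single n r =>
      erw [ModuleCat.MonoidalCategory.whiskerLeft_apply]
      show m ⊗ₜ[R1 k] (d2 k (Finsupp.single n r)) = _
      rw [d2_single, TensorProduct.tmul_sub]
      have h1 : Finsupp.single (n+1) (t k n * r) = t k n • Finsupp.single (n+1) r := by
        rw [Finsupp.smul_single, smul_eq_mul]
      have h2 : m ⊗ₜ[R1 k] (t k n • Finsupp.single (n+1) r)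
          = (t k n • m) ⊗ₜ[R1 k] Finsupp.single (n+1) r :=
        (TensorProduct.smul_tmul _ _ _).symm
      have h3 : t k n • m = 0 := smul_quot_zero k _ (t_mem k n) m
      rw [h1, h2, h3, TensorProduct.zero_tmul]
      abel

/-- the complex `resField ⊗ cpx` -/
noncomputable def Qc : ChainComplex (ModuleCat (R1 k)) ℕ :=
  ((Fk k).mapHomologicalComplex (ComplexShape.down ℕ)).obj (cpx k)

lemma Qc_exactAt (i : ℕ) : (Qc k).ExactAt (i+1) := by
  rw [HomologicalComplex.exactAt_iff' _ (i+2) (i+1) i (by simp) (by simp),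
    ShortComplex.moduleCat_exact_iff]
  intro x hx
  rcases i with _ | _ | i
  · -- at 1
    refine ⟨x, ?_⟩
    show (Fk k).map ((cpx k).d 2 1) x = x
    rw [cpx_d]
    exact whisker_d2_apply k x
  · -- at 2
    have h1 : (Fk k).map ((cpx k).d 2 1) x = x := by
      rw [cpx_d]
      exact whisker_d2_apply k x
    have hx0 : x = 0 := by
      rw [← h1]
      exact hx
    exact ⟨0, by rw [map_zero, hx0]⟩
  · -- at i+3 : middle is resField ⊗ PUnit
    have hz : ∀ z : TensorProduct (R1 k) (R1 k ⧸ m1 k) PUnit.{1}, z = 0 := by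
      intro z
      induction z using TensorProduct.induction_on with
      | zero => rfl
      | add a b ha hb => rw [ha, hb, add_zero]
      | tmul m p =>
        have : p = 0 := Subsingleton.elim _ _
        rw [this, TensorProduct.tmul_zero]
    have hx0 : x = 0 := hz x
    exact ⟨0, by rw [map_zero, hx0]⟩

lemma torMod_isZero (i : ℕ) :
    Limits.IsZero (TorMod k (i+1) (resField k) (resField k)) := by
  have h : Limits.IsZero ((Qc k).homology (i+1)) :=
    (HomologicalComplex.exactAt_iff_isZero_homology (Qc k) (i+1)).mp (Qc_exactAt k i)
  exact Limits.IsZero.of_iso h ((PRes k).isoLeftDerivedObj (Fk k) (i+1))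

lemma subsingleton_of_isZero {R : Type} [Ring R] {M : ModuleCat R}
    (h : Limits.IsZero M) : Subsingleton M := by
  refine subsingleton_of_forall_eq 0 fun x => ?_
  have he : (𝟙 M : M ⟶ M) = (0 : M ⟶ M) := h.eq_of_src _ _
  calc x = (𝟙 M : M ⟶ M) x := rfl
    _ = (0 : M ⟶ M) x := by rw [he]
    _ = 0 := rfl

lemma tor_subsingleton (i : ℕ) (hi : 1 ≤ i) :
    Subsingleton (TorMod k i (resField k) (resField k)) := by
  rcases i with _ | j
  · omega
  · exact subsingleton_of_isZero (torMod_isZero k j)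

/-- equiv of subsingleton modules -/
noncomputable def subsingletonEquiv {R M N : Type*} [Semiring R]
    [AddCommMonoid M] [Module R M] [AddCommMonoid N] [Module R N]
    [Subsingleton M] [Subsingleton N] : M ≃ₗ[R] N where
  toFun _ := 0
  map_add' _ _ := Subsingleton.elim _ _
  map_smul' _ _ := Subsingleton.elim _ _
  invFun _ := 0
  left_inv _ := Subsingleton.elim _ _
  right_inv _ := Subsingleton.elim _ _

lemma not_flat : ¬ Module.Flat (R1 k) (R1 k ⧸ m1 k) := by
  intro hF
  set f : R1 k →ₗ[R1 k] R1 k := LinearMap.mulLeft (R1 k) (g k 0) with hf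
  have hfinj : Function.Injective f := by
    intro a b hab
    exact mul_left_cancel₀ (g_ne_zero k 0) hab
  have hinj := Module.Flat.rTensor_preserves_injective_linearMap
    (M := R1 k ⧸ m1 k) f hfinj
  set c1 : R1 k ⧸ m1 k := Submodule.Quotient.mk 1 with hc1
  have hz : LinearMap.rTensor (R1 k ⧸ m1 k) f ((1 : R1 k) ⊗ₜ c1) = 0 := by
    rw [LinearMap.rTensor_tmul]
    have hf1 : f 1 = g k 0 := by rw [hf, LinearMap.mulLeft_apply, mul_one]
    rw [hf1]
    have h2 : (g k 0) ⊗ₜ[R1 k] c1 = (1 : R1 k) ⊗ₜ[R1 k] (g k 0 • c1) := by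
      rw [← TensorProduct.smul_tmul, smul_eq_mul, mul_one]
    rw [h2, smul_quot_zero k _ (g_mem k 0) c1, TensorProduct.tmul_zero]
  have h0 : (1 : R1 k) ⊗ₜ[R1 k] c1 = (0 : TensorProduct (R1 k) (R1 k) (R1 k ⧸ m1 k)) := by
    apply hinj
    rw [hz, map_zero]
  have h1 := congrArg (fun z => (TensorProduct.lid (R1 k) (R1 k ⧸ m1 k)).toLinearMap z) h0
  simp only [LinearMap.map_zero] at h1
  exact one_not_mem_m1 k ((Submodule.Quotient.mk_eq_zero _).mp (by
    have h2 : c1 = 0 := by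
      have h3 : (TensorProduct.lid (R1 k) (R1 k ⧸ m1 k)) ((1 : R1 k) ⊗ₜ[R1 k] c1) = c1 := by
        rw [TensorProduct.lid_tmul, one_smul]
      rw [← h3]
      exact h1
    rw [hc1] at h2
    exact h2))

lemma not_projective : ¬ Module.Projective (R1 k) (R1 k ⧸ m1 k) := by
  intro hP
  exact not_flat k (letI := hP; Module.Flat.of_projective (R := R1 k) (M := R1 k ⧸ m1 k))

end Tensor

end St19

/-- Tor₁(k,k) ≅ m₁/m₁² = 0 and Tor_i(k,k) = 0 for all i ≥ 1, although k is
neither flat nor projective over R₁. -/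
theorem stmt19 (k : Type) [Field k] :
    Subsingleton (m1 k).Cotangent ∧
    Nonempty ((TorMod k 1 (resField k) (resField k)) ≃ₗ[R1 k] (m1 k).Cotangent) ∧
    (∀ i : ℕ, 1 ≤ i → Subsingleton (TorMod k i (resField k) (resField k))) ∧
    ¬ Module.Flat (R1 k) (R1 k ⧸ m1 k) ∧
    ¬ Module.Projective (R1 k) (R1 k ⧸ m1 k) := by
  have h1 : Subsingleton (m1 k).Cotangent := St19.cotangent_subsingleton k
  have h2 := St19.tor_subsingleton k
  refine ⟨h1, ?_, h2, St19.not_flat k, St19.not_projective k⟩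
  have := h2 1 le_rfl
  exact ⟨St19.subsingletonEquiv⟩
end
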